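/- Let T_l be a nonsingular l×l matrix over GF(2), let T_L = T₂⊗T_l = [[T_l,0],[T_l,T_l]], let 0 ≤ i ≤ l−1, and let e = [e¹,e²] ∈ {0,1}^{2l} be an erasure pattern with halves e¹,e² ∈ {0,1}^l. Then e kills bit channel i of T_L if and only if the componentwise OR pattern e¹∨e² ∈ {0,1}^l (whose u-th coordinate is 1 exactly when e¹_u = 1 or e²_u = 1) kills bit channel i of T_l. -/
import Mathlib


open Matrix

/-- Kronecker product of square matrices over GF(2), with row/column index
pairs ordered lexicographically: `(a, b)` corresponds to index `a * n + b`. -/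
noncomputable def kron {m n : ℕ} (A : Matrix (Fin m) (Fin m) (ZMod 2))
    (B : Matrix (Fin n) (Fin n) (ZMod 2)) :
    Matrix (Fin (m * n)) (Fin (m * n)) (ZMod 2) :=
  Matrix.reindex finProdFinEquiv finProdFinEquiv (Matrix.kroneckerMap (· * ·) A B)

/-- The matrix `T₂ = [[1,0],[1,1]]` over GF(2). -/
def Ttwo : Matrix (Fin 2) (Fin 2) (ZMod 2) := !![1, 0; 1, 1]

/-- An erasure pattern `e : Fin l → Bool` (where `e j = true` means the `j`-th
copy of the channel is erased) kills bit channel `i` of the kernel `T` if the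
vector `Y_{l-i} = (1,0,…,0)ᵀ` of length `l - i` (indexed by rows `r` with
`i ≤ r`) is not in the `𝔽₂`-linear span of the columns of the submatrix
`T[i : l-1]` at the non-erased positions. -/
def Kills {l : ℕ} (T : Matrix (Fin l) (Fin l) (ZMod 2)) (i : Fin l)
    (e : Fin l → Bool) : Prop :=
  (fun r : {r : Fin l // i ≤ r} => if r.val = i then (1 : ZMod 2) else 0) ∉
    Submodule.span (ZMod 2)
      {w : {r : Fin l // i ≤ r} → ZMod 2 | ∃ j : Fin l, e j = false ∧ w = fun r => T r.val j}

lemma mem_span_cols_iff {ι M : Type*} [Fintype ι] [AddCommGroup M] [Module (ZMod 2) M]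
    (e : ι → Bool) (v : ι → M) (x : M) :
    x ∈ Submodule.span (ZMod 2) {w | ∃ j, e j = false ∧ w = v j} ↔
      ∃ c : ι → ZMod 2, (∀ j, e j = true → c j = 0) ∧ ∑ j, c j • v j = x := by
  classical
  constructor
  · intro hx
    induction hx using Submodule.span_induction with
    | mem w hw =>
      obtain ⟨j, hj, rfl⟩ := hw
      refine ⟨fun k => if k = j then 1 else 0, ?_, by simp⟩
      intro k hk
      by_cases h : k = j
      · subst h; rw [hk] at hj; cases hj
      · simp [h]
    | zero => exact ⟨0, fun _ _ => rfl, by simp⟩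
    | add a b _ _ ha hb =>
      obtain ⟨c1, h1, h1s⟩ := ha
      obtain ⟨c2, h2, h2s⟩ := hb
      exact ⟨c1 + c2, fun j hj => by simp [h1 j hj, h2 j hj],
        by simp [add_smul, Finset.sum_add_distrib, h1s, h2s]⟩
    | smul a y _ hy =>
      obtain ⟨c, h1, h1s⟩ := hy
      exact ⟨a • c, fun j hj => by simp [h1 j hj],
        by rw [← h1s, Finset.smul_sum]; simp [smul_smul]⟩
  · rintro ⟨c, hc, rfl⟩
    refine Submodule.sum_mem _ fun j _ => ?_
    by_cases h : e j = true
    · rw [hc j h, zero_smul]; exact Submodule.zero_mem _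
    · exact Submodule.smul_mem _ _ (Submodule.subset_span ⟨j, by simpa using h, rfl⟩)

lemma fin_lt1 {l : ℕ} (u : Fin l) : (u : ℕ) < 2 * l := by omega

lemma fin_lt2 {l : ℕ} (u : Fin l) : l + (u : ℕ) < 2 * l := by omega

lemma sum_split {M : Type*} [AddCommMonoid M] {l : ℕ} (f : Fin (2 * l) → M) :
    ∑ t, f t = ∑ u : Fin l, f ⟨u, fin_lt1 u⟩ + ∑ u : Fin l, f ⟨l + u, fin_lt2 u⟩ := by
  rw [Fintype.sum_equiv (finCongr (two_mul l)) f
    (fun s : Fin (l + l) => f ((finCongr (two_mul l)).symm s)) (fun t => by simp)]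
  rw [Fin.sum_univ_add]
  rfl

lemma eval_split {l : ℕ} (p : Fin (2 * l) → Prop) (M : Matrix (Fin (2 * l)) (Fin (2 * l)) (ZMod 2))
    (D : Fin (2 * l) → ZMod 2) (R : {r : Fin (2 * l) // p r}) :
    (∑ t, D t • fun rr : {r : Fin (2 * l) // p r} => M rr.val t) R =
      ∑ u : Fin l, (D ⟨(u : ℕ), fin_lt1 u⟩ * M R.val ⟨(u : ℕ), fin_lt1 u⟩ +
        D ⟨l + (u : ℕ), fin_lt2 u⟩ * M R.val ⟨l + (u : ℕ), fin_lt2 u⟩) := by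
  rw [Finset.sum_apply]
  simp only [Pi.smul_apply, smul_eq_mul]
  rw [sum_split (f := fun t => D t * M R.val t), ← Finset.sum_add_distrib]

lemma kron_apply' {l : ℕ} (T : Matrix (Fin l) (Fin l) (ZMod 2)) (a c : Fin 2) (b d : Fin l) :
    kron Ttwo T (finProdFinEquiv (a, b)) (finProdFinEquiv (c, d)) = Ttwo a c * T b d := by
  simp [kron]

lemma kron_lo {l : ℕ} (u : Fin l) :
    (⟨(u : ℕ), fin_lt1 u⟩ : Fin (2 * l)) = finProdFinEquiv ((0 : Fin 2), u) := by
  apply Fin.ext; simp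

lemma kron_hi {l : ℕ} (u : Fin l) :
    (⟨l + (u : ℕ), fin_lt2 u⟩ : Fin (2 * l)) = finProdFinEquiv ((1 : Fin 2), u) := by
  apply Fin.ext; simp; omega

lemma kLL {l : ℕ} (T : Matrix (Fin l) (Fin l) (ZMod 2)) (b d : Fin l) :
    kron Ttwo T ⟨(b : ℕ), fin_lt1 b⟩ ⟨(d : ℕ), fin_lt1 d⟩ = T b d := by
  rw [kron_lo b, kron_lo d, kron_apply']; simp [Ttwo]

lemma kLH {l : ℕ} (T : Matrix (Fin l) (Fin l) (ZMod 2)) (b d : Fin l) :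
    kron Ttwo T ⟨(b : ℕ), fin_lt1 b⟩ ⟨l + (d : ℕ), fin_lt2 d⟩ = 0 := by
  rw [kron_lo b, kron_hi d, kron_apply']; simp [Ttwo]

lemma kHL {l : ℕ} (T : Matrix (Fin l) (Fin l) (ZMod 2)) (b d : Fin l) :
    kron Ttwo T ⟨l + (b : ℕ), fin_lt2 b⟩ ⟨(d : ℕ), fin_lt1 d⟩ = T b d := by
  rw [kron_hi b, kron_lo d, kron_apply']; simp [Ttwo]

lemma kHH {l : ℕ} (T : Matrix (Fin l) (Fin l) (ZMod 2)) (b d : Fin l) :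
    kron Ttwo T ⟨l + (b : ℕ), fin_lt2 b⟩ ⟨l + (d : ℕ), fin_lt2 d⟩ = T b d := by
  rw [kron_hi b, kron_hi d, kron_apply']; simp [Ttwo]

set_option maxHeartbeats 1000000 in
theorem kills_kron_upperHalf_iff {l : ℕ} (T : Matrix (Fin l) (Fin l) (ZMod 2))
    (hT : IsUnit T) (i : Fin l) (e : Fin (2 * l) → Bool) :
    Kills (kron Ttwo T) ⟨(i : ℕ), by have := i.isLt; omega⟩ e ↔
      Kills T i (fun u =>
        e ⟨(u : ℕ), by have := u.isLt; omega⟩ || e ⟨l + (u : ℕ), by have := u.isLt; omega⟩) := by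
  have hl : 0 < l := i.pos
  have hil := i.isLt
  set i' : Fin (2 * l) := ⟨(i : ℕ), by omega⟩ with hidef
  unfold Kills
  rw [not_iff_not, mem_span_cols_iff, mem_span_cols_iff]
  constructor
  · rintro ⟨C, hC0, hCs⟩
    -- lower-block rows give C ⟨j⟩ + C ⟨l+j⟩ = 0
    have hrow : ∀ b : Fin l,
        ∑ j : Fin l, T b j * (C ⟨j, fin_lt1 j⟩ + C ⟨l + j, fin_lt2 j⟩) = 0 := by
      intro b
      have hle : i' ≤ (⟨l + (b : ℕ), fin_lt2 b⟩ : Fin (2*l)) := by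
        rw [Fin.le_def]; simp [hidef]; omega
      have h1 := (eval_split (fun r => i' ≤ r) (kron Ttwo T) C
        ⟨⟨l + (b : ℕ), fin_lt2 b⟩, hle⟩).symm.trans (congrFun hCs ⟨⟨l + (b : ℕ), fin_lt2 b⟩, hle⟩)
      have hne : (⟨l + (b:ℕ), fin_lt2 b⟩ : Fin (2*l)) ≠ i' := by
        intro h; have h2 := congrArg Fin.val h; simp [hidef] at h2; omega
      rw [if_neg hne] at h1
      rw [← h1]
      refine Finset.sum_congr rfl fun j _ => ?_
      rw [kHL T b j, kHH T b j]; ring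
    have hx0 : ∀ j : Fin l, C ⟨j, fin_lt1 j⟩ + C ⟨l + j, fin_lt2 j⟩ = 0 := by
      have hinj := Matrix.mulVec_injective_iff_isUnit.mpr hT
      have hmv : T.mulVec (fun j : Fin l => C ⟨j, fin_lt1 j⟩ + C ⟨l + j, fin_lt2 j⟩) =
          T.mulVec 0 := by
        funext b
        rw [Matrix.mulVec_zero]
        show ∑ j : Fin l, T b j * (C ⟨j, fin_lt1 j⟩ + C ⟨l + j, fin_lt2 j⟩) = (0 : Fin l → ZMod 2) b
        rw [hrow b]; rfl
      intro j
      exact congrFun (hinj hmv) j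
    have hsame : ∀ j : Fin l, C ⟨l + j, fin_lt2 j⟩ = C ⟨j, fin_lt1 j⟩ := by
      intro j
      have h2 : C ⟨l + j, fin_lt2 j⟩ = - C ⟨j, fin_lt1 j⟩ := by linear_combination hx0 j
      rw [h2, CharTwo.neg_eq]
    refine ⟨fun j => C ⟨j, fin_lt1 j⟩, ?_, ?_⟩
    · intro j hj
      show C ⟨(j : ℕ), fin_lt1 j⟩ = 0
      rcases Bool.or_eq_true_iff.mp hj with h | h
      · exact hC0 _ h
      · rw [← hsame j]; exact hC0 _ h
    · funext r
      rw [Finset.sum_apply]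
      have hle : i' ≤ (⟨(r.val : ℕ), fin_lt1 r.val⟩ : Fin (2*l)) := by
        rw [Fin.le_def]; simp [hidef]; exact r.2
      have h1 := (eval_split (fun rr => i' ≤ rr) (kron Ttwo T) C
        ⟨⟨(r.val : ℕ), fin_lt1 r.val⟩, hle⟩).symm.trans
        (congrFun hCs ⟨⟨(r.val : ℕ), fin_lt1 r.val⟩, hle⟩)
      have hsum : ∑ u : Fin l, (C ⟨(u : ℕ), fin_lt1 u⟩ *
            kron Ttwo T ⟨(r.val : ℕ), fin_lt1 r.val⟩ ⟨(u : ℕ), fin_lt1 u⟩ +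
          C ⟨l + (u : ℕ), fin_lt2 u⟩ *
            kron Ttwo T ⟨(r.val : ℕ), fin_lt1 r.val⟩ ⟨l + (u : ℕ), fin_lt2 u⟩) =
          ∑ u : Fin l, C ⟨(u : ℕ), fin_lt1 u⟩ * T r.val u := by
        refine Finset.sum_congr rfl fun u _ => ?_
        rw [kLL T r.val u, kLH T r.val u]; ring
      have h2 := hsum.symm.trans h1
      have hiff : ((⟨(r.val : ℕ), fin_lt1 r.val⟩ : Fin (2*l)) = i') ↔ ((r.val : Fin l) = i) := by
        constructor
        · intro h; have hv := congrArg Fin.val h; simp [hidef] at hv; exact Fin.ext hv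
        · intro h; apply Fin.ext; simp [hidef]; exact congrArg Fin.val h
      refine Eq.trans (Finset.sum_congr rfl fun u _ => ?_) (h2.trans ?_)
      · show C ⟨(u : ℕ), fin_lt1 u⟩ • T r.val u = C ⟨(u : ℕ), fin_lt1 u⟩ * T r.val u
        rw [smul_eq_mul]
      · by_cases h : (r.val : Fin l) = i
        · rw [if_pos (hiff.mpr h), if_pos h]
        · rw [if_neg (fun hh => h (hiff.mp hh)), if_neg h]
  · rintro ⟨c, hc0, hcs⟩
    refine ⟨fun t => c ⟨t % l, Nat.mod_lt _ hl⟩, ?_, ?_⟩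
    · intro t ht
      apply hc0
      by_cases h : (t : ℕ) < l
      · apply Bool.or_eq_true_iff.mpr; left
        have heq : (⟨((⟨t % l, Nat.mod_lt _ hl⟩ : Fin l) : ℕ), fin_lt1 _⟩ : Fin (2*l)) = t := by
          apply Fin.ext
          exact Nat.mod_eq_of_lt h
        rw [heq]; exact ht
      · apply Bool.or_eq_true_iff.mpr; right
        have heq : (⟨l + ((⟨t % l, Nat.mod_lt _ hl⟩ : Fin l) : ℕ), fin_lt2 _⟩ : Fin (2*l)) = t := by
          apply Fin.ext
          show l + (t : ℕ) % l = (t : ℕ)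
          have h2 := t.isLt
          have h3 : (t : ℕ) % l = (t : ℕ) - l := by
            rw [Nat.mod_eq_sub_mod (le_of_not_gt h), Nat.mod_eq_of_lt (by omega)]
          omega
        rw [heq]; exact ht
    · funext r
      refine Eq.trans (eval_split (fun rr => i' ≤ rr) (kron Ttwo T)
        (fun t => c ⟨t % l, Nat.mod_lt _ hl⟩) r) ?_
      have hcu : ∀ u : Fin l,
          (⟨((⟨(u:ℕ), fin_lt1 u⟩ : Fin (2*l)) : ℕ) % l, Nat.mod_lt _ hl⟩ : Fin l) = u := by
        intro u; apply Fin.ext; simp [Nat.mod_eq_of_lt u.isLt]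
      have hcu2 : ∀ u : Fin l,
          (⟨((⟨l + (u:ℕ), fin_lt2 u⟩ : Fin (2*l)) : ℕ) % l, Nat.mod_lt _ hl⟩ : Fin l) = u := by
        intro u; apply Fin.ext; simp [Nat.mod_eq_of_lt u.isLt]
      by_cases h : ((r : Fin (2*l)) : ℕ) < l
      · -- upper row
        set b : Fin l := ⟨(r : Fin (2*l)), h⟩ with hb
        have hrb : (r : Fin (2*l)) = ⟨(b : ℕ), fin_lt1 b⟩ := by apply Fin.ext; simp [hb]
        have hib : i ≤ b := by
          have := r.2
          rw [Fin.le_def] at this ⊢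
          simpa [hidef, hb] using this
        have h2 := congrFun hcs ⟨b, hib⟩
        rw [Finset.sum_apply] at h2
        simp only [Pi.smul_apply, smul_eq_mul] at h2
        have hsum : ∑ u : Fin l,
            ((fun t : Fin (2*l) => c ⟨t % l, Nat.mod_lt _ hl⟩) ⟨(u:ℕ), fin_lt1 u⟩ *
              kron Ttwo T (r : Fin (2*l)) ⟨(u:ℕ), fin_lt1 u⟩ +
             (fun t : Fin (2*l) => c ⟨t % l, Nat.mod_lt _ hl⟩) ⟨l + (u:ℕ), fin_lt2 u⟩ *
              kron Ttwo T (r : Fin (2*l)) ⟨l + (u:ℕ), fin_lt2 u⟩) =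
            ∑ u : Fin l, c u * T b u := by
          refine Finset.sum_congr rfl fun u _ => ?_
          show c ⟨((⟨(u:ℕ), fin_lt1 u⟩ : Fin (2*l)) : ℕ) % l, Nat.mod_lt _ hl⟩ *
              kron Ttwo T (r : Fin (2*l)) ⟨(u:ℕ), fin_lt1 u⟩ +
            c ⟨((⟨l + (u:ℕ), fin_lt2 u⟩ : Fin (2*l)) : ℕ) % l, Nat.mod_lt _ hl⟩ *
              kron Ttwo T (r : Fin (2*l)) ⟨l + (u:ℕ), fin_lt2 u⟩ = c u * T b u
          rw [hcu u, hcu2 u, hrb, kLL T b u, kLH T b u]; ring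
        refine hsum.trans (h2.trans ?_)
        have hiff : (b = i) ↔ ((r : Fin (2*l)) = i') := by
          constructor
          · intro hh; apply Fin.ext; rw [hrb]; simp [hidef]; exact congrArg Fin.val hh
          · intro hh; apply Fin.ext
            have hv := congrArg Fin.val hh; simp [hidef, hb] at hv ⊢; exact hv
        by_cases hbi : b = i
        · rw [if_pos hbi, if_pos (hiff.mp hbi)]
        · rw [if_neg hbi, if_neg (fun hh => hbi (hiff.mpr hh))]
      · -- lower row
        have hr2 := ((r : Fin (2*l))).isLt
        set b : Fin l := ⟨(r : Fin (2*l)) - l, by omega⟩ with hb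
        have hrb : (r : Fin (2*l)) = ⟨l + (b : ℕ), fin_lt2 b⟩ := by
          apply Fin.ext; simp [hb]; omega
        have hne : (r : Fin (2*l)) ≠ i' := by
          intro hh; have hv := congrArg Fin.val hh; simp [hidef] at hv; omega
        rw [if_neg hne]
        refine Finset.sum_eq_zero fun u _ => ?_
        show c ⟨((⟨(u:ℕ), fin_lt1 u⟩ : Fin (2*l)) : ℕ) % l, Nat.mod_lt _ hl⟩ *
            kron Ttwo T (r : Fin (2*l)) ⟨(u:ℕ), fin_lt1 u⟩ +
          c ⟨((⟨l + (u:ℕ), fin_lt2 u⟩ : Fin (2*l)) : ℕ) % l, Nat.mod_lt _ hl⟩ *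
            kron Ttwo T (r : Fin (2*l)) ⟨l + (u:ℕ), fin_lt2 u⟩ = 0
        rw [hcu u, hcu2 u, hrb, kHL T b u, kHH T b u]
        have h20 : (2 : ZMod 2) = 0 := rfl
        ring_nf
        rw [h20, mul_zero]
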